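/- For all 0 ≤ m < n, the recurrence c_{m,n} = (1−α_m) c_{m−1,n} + (1−α_n) c_{m,n−1} + (α_n α_m − (1−α_n)(1−α_m)) c_{m−1,n−1} holds. -/

import Mathlib

/-!
Write `T_{m,n} = ∑_{j ≤ m} π_j^m c_{j-1,n}`, so that `c_{m,n} = ∑_{k=m+1}^n π_k^n T_{m,k-1}`.
Since `π_k^{n+1} = (1 - α_{n+1}) π_k^n` for `k ≤ n` and `π_{n+1}^{n+1} = α_{n+1}`, splitting off the
top index of either sum gives
`c_{m,n+1} = (1 - α_{n+1}) c_{m,n} + α_{n+1} T_{m,n}` and `T_{m+1,n} = (1 - α_{m+1}) T_{m,n} + α_{m+1} c_{m,n}`,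
and eliminating `T` yields the recurrence. For `m = 0`, `α_0 = 1` gives `T_{0,n} = c_{-1,n}` and kills
the `c_{-1,n+1}` term.
-/

open Finset

section

variable (α : ℕ → ℝ)

def alphaWeight (k n : ℕ) : ℝ := α k * ∏ i ∈ Icc (k + 1) n, (1 - α i)

lemma alphaWeight_succ_right {k n : ℕ} (hk : k ≤ n) :
    alphaWeight α k (n + 1) = (1 - α (n + 1)) * alphaWeight α k n := by
  rw [alphaWeight, alphaWeight, prod_Icc_succ_top (by omega)]
  ring

lemma alphaWeight_self (n : ℕ) : alphaWeight α n n = α n := by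
  simp [alphaWeight]

lemma sum_Icc_alphaWeight_succ (f : ℕ → ℝ) {a n : ℕ} (ha : a ≤ n + 1) :
    ∑ k ∈ Icc a (n + 1), alphaWeight α k (n + 1) * f k
      = (1 - α (n + 1)) * ∑ k ∈ Icc a n, alphaWeight α k n * f k + α (n + 1) * f (n + 1) := by
  rw [sum_Icc_succ_top ha, alphaWeight_self, mul_sum]
  congr 1
  refine sum_congr rfl fun k hk => ?_
  rw [alphaWeight_succ_right α (mem_Icc.mp hk).2]
  ring

lemma sum_range_alphaWeight_succ (f : ℕ → ℝ) (m : ℕ) :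
    ∑ j ∈ range (m + 2), alphaWeight α j (m + 1) * f j
      = (1 - α (m + 1)) * ∑ j ∈ range (m + 1), alphaWeight α j m * f j
        + α (m + 1) * f (m + 1) := by
  simp only [Nat.range_succ_eq_Icc_zero]
  exact sum_Icc_alphaWeight_succ α f (Nat.zero_le _)

variable (c : ℤ → ℤ → ℝ)

def alphaRowSum (m : ℕ) (n : ℤ) : ℝ := ∑ j ∈ range (m + 1), alphaWeight α j m * c (j - 1) n

lemma alphaRowSum_zero (hα0 : α 0 = 1) (n : ℤ) : alphaRowSum α c 0 n = c (-1) n := by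
  simp [alphaRowSum, alphaWeight_self, hα0]

lemma alphaRowSum_succ (m : ℕ) (n : ℤ) :
    alphaRowSum α c (m + 1) n = (1 - α (m + 1)) * alphaRowSum α c m n + α (m + 1) * c m n := by
  simpa [alphaRowSum] using sum_range_alphaWeight_succ α (fun j => c ((j : ℤ) - 1) n) m

lemma double_sum_eq_sum_alphaRowSum (m n : ℕ) :
    ∑ j ∈ range (m + 1), ∑ k ∈ Icc (m + 1) n,
        alphaWeight α j m * alphaWeight α k n * c ((j : ℤ) - 1) ((k : ℤ) - 1)
      = ∑ k ∈ Icc (m + 1) n, alphaWeight α k n * alphaRowSum α c m ((k : ℤ) - 1) := by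
  rw [sum_comm]
  refine sum_congr rfl fun k _ => ?_
  rw [alphaRowSum, mul_sum]
  exact sum_congr rfl fun j _ => by ring

lemma c_succ_right
    (hcr : ∀ m n : ℕ, m ≤ n →
      c m n = ∑ j ∈ range (m + 1), ∑ k ∈ Icc (m + 1) n,
        alphaWeight α j m * alphaWeight α k n * c ((j : ℤ) - 1) ((k : ℤ) - 1))
    {m n : ℕ} (hmn : m ≤ n) :
    c m (n + 1 : ℕ) = (1 - α (n + 1)) * c m n + α (n + 1) * alphaRowSum α c m n := by
  rw [hcr m (n + 1) (by omega), hcr m n hmn, double_sum_eq_sum_alphaRowSum,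
    double_sum_eq_sum_alphaRowSum, sum_Icc_alphaWeight_succ α _ (by omega)]
  push_cast
  rw [add_sub_cancel_right]

end

/-- For `0 ≤ m < n` the quantities `c_{m,n}` satisfy the recurrence
`c_{m,n} = (1−α_m) c_{m−1,n} + (1−α_n) c_{m,n−1} + (α_n α_m − (1−α_n)(1−α_m)) c_{m−1,n−1}`. -/
theorem c_alternative_recurrence
    (α : ℕ → ℝ) (hα0 : α 0 = 1)
    (c : ℤ → ℤ → ℝ)
    (hcr : ∀ m n : ℕ, m ≤ n →
      c m n = ∑ j ∈ Finset.range (m + 1), ∑ k ∈ Finset.Icc (m + 1) n,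
        (α j * ∏ i ∈ Finset.Icc (j + 1) m, (1 - α i)) *
          (α k * ∏ i ∈ Finset.Icc (k + 1) n, (1 - α i)) *
            c ((j : ℤ) - 1) ((k : ℤ) - 1))
    (m n : ℕ) (hmn : m < n) :
    c m n = (1 - α m) * c ((m : ℤ) - 1) n + (1 - α n) * c m ((n : ℤ) - 1)
      + (α n * α m - (1 - α n) * (1 - α m)) * c ((m : ℤ) - 1) ((n : ℤ) - 1) := by
  obtain ⟨n, rfl⟩ : ∃ n', n = n' + 1 := ⟨n - 1, by omega⟩
  have hn : ((n + 1 : ℕ) : ℤ) - 1 = n := by push_cast; ring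
  rw [hn, c_succ_right α c hcr (by omega : m ≤ n)]
  cases m with
  | zero =>
    rw [alphaRowSum_zero α c hα0, hα0]
    push_cast
    ring
  | succ m =>
    have hm : ((m + 1 : ℕ) : ℤ) - 1 = m := by push_cast; ring
    rw [hm, c_succ_right α c hcr (by omega : m ≤ n), alphaRowSum_succ]
    ring
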